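/- arXiv:2409.06425 — 2 statements merged into one kernel-verified Lean document; each statement's English description precedes it below -/
import Mathlib

section
/- For all positive integers r < k, the limit s(k,r) = lim_{n→∞} S(n,k,r)/n^r equals s([0,1],k,r), the infimum of λ(C) over all Lebesgue measurable covering (k−r)-insertion codes C ⊆ [0,1]^r. -/
/-!
Both inequalities transfer codes between the alphabet `[n]` and the cube.

A covering code `D ⊆ [n]^r` blows up to the union of the grid boxes
`∏ᵢ [yᵢ/n, (yᵢ+1)/n]`, `y ∈ D`, a measurable covering code in `[0,1]^r` of volume at most
`|D| / n^r`; so the infimum is at most every `S(n,k,r)/n^r`.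

Conversely, let `C ⊆ [0,1]^r` be a measurable covering code and let `t ∈ [0,1]^n` be uniformly
random. The code `{y ∈ [n]^r | t ∘ y ∈ C}` covers `[n]^k`, since `t ∘ a` is covered by `C` for
every `a ∈ [n]^k`. For injective `y` the point `t ∘ y` is uniform in `[0,1]^r`, so the expected size
of this code is at most `λ(C) n^r + (n^r - n(n-1)⋯(n-r+1)) = λ(C) n^r + o(n^r)`, and some `t`
does at least as well.
-/

open MeasureTheory Filter Topology ENNReal

/-- `x` covers `a` if `x` is a subsequence of `a`. -/
def Covers {X : Type*} {r k : ℕ} (x : Fin r → X) (a : Fin k → X) : Prop :=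
  ∃ g : Fin r → Fin k, StrictMono g ∧ ∀ i, a (g i) = x i

/-- `C ⊆ X^r` is a covering `(k-r)`-insertion code over `X`: every sequence in `X^k`
is covered by some sequence in `C`. -/
def IsCoveringCode {X : Type*} (r k : ℕ) (C : Set (Fin r → X)) : Prop :=
  ∀ a : Fin k → X, ∃ x ∈ C, Covers x a

/-- Minimum size of a covering `(k-r)`-insertion code over the alphabet `[n]`. -/
noncomputable def covNum (n k r : ℕ) : ℕ :=
  sInf {m | ∃ C : Finset (Fin r → Fin n), IsCoveringCode r k (↑C : Set (Fin r → Fin n)) ∧ C.card = m}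

/-- The unit cube `[0,1]^r`. -/
def unitCube (r : ℕ) : Set (Fin r → ℝ) := {x | ∀ i, x i ∈ Set.Icc (0 : ℝ) 1}

/-- `C ⊆ [0,1]^r` covers `[0,1]^k`. -/
def CoversCube (r k : ℕ) (C : Set (Fin r → ℝ)) : Prop :=
  ∀ a ∈ unitCube k, ∃ x ∈ C, Covers x a

/-- Delete the `i`-th coordinate of a length `r+1` sequence. -/
def deleteAt {X : Type*} {r : ℕ} (i : Fin (r + 1)) (x : Fin (r + 1) → X) : Fin r → X :=
  x ∘ i.succAbove

/-- `extSet C i` is the set `C_i` of sequences in `X^{r+1}` whose subsequence obtained by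
deleting the `i`-th coordinate belongs to `C`. -/
def extSet {X : Type*} {r : ℕ} (C : Set (Fin r → X)) (i : Fin (r + 1)) :
    Set (Fin (r + 1) → X) :=
  {x | deleteAt i x ∈ C}

/-- A set of sequences is symmetric if it is closed under permuting the coordinates. -/
def IsSymmetric {X : Type*} {k : ℕ} (M : Set (Fin k → X)) : Prop :=
  ∀ x ∈ M, ∀ σ : Equiv.Perm (Fin k), x ∘ σ ∈ M

/-- The symmetric closure of a set of sequences. -/
def SymClosure {X : Type*} {k : ℕ} (M : Set (Fin k → X)) : Set (Fin k → X) :=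
  {x | ∃ σ : Equiv.Perm (Fin k), x ∘ σ ∈ M}

/-- A Turán `(n,k,r)`-system: a family of `r`-element subsets of `[n]` such that every
`k`-element subset of `[n]` contains a member of the family. -/
def IsTuranSystem (n k r : ℕ) (F : Finset (Finset (Fin n))) : Prop :=
  (∀ A ∈ F, A.card = r) ∧ ∀ K : Finset (Fin n), K.card = k → ∃ A ∈ F, A ⊆ K

/-- Minimum size of a Turán `(n,k,r)`-system. -/
noncomputable def turanNum (n k r : ℕ) : ℕ :=
  sInf {m | ∃ F : Finset (Finset (Fin n)), IsTuranSystem n k r F ∧ F.card = m}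

theorem MeasureTheory.Measure.pi_map_comp_of_injective {ι ι' X : Type*} [Fintype ι] [Fintype ι']
    [MeasurableSpace X] (ν : Measure X) [IsProbabilityMeasure ν] {y : ι' → ι}
    (hy : Function.Injective y) :
    (Measure.pi fun _ : ι => ν).map (fun t => t ∘ y) = Measure.pi fun _ : ι' => ν := by
  have hy' : (fun t : ι → X => t ∘ y) =
      Equiv.piCongrLeft (fun _ => X) (Equiv.ofInjective y hy).symm ∘
        (Set.range y).domRestrict := by
    ext t i
    simp [Equiv.piCongrLeft_apply]
  rw [← Measure.infinitePi_eq_pi (fun _ : ι => ν), ← Measure.infinitePi_eq_pi (fun _ : ι' => ν),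
    hy', ← Measure.map_map (by fun_prop) (by fun_prop), Measure.infinitePi_map_restrict']
  exact Measure.infinitePi_map_piCongrLeft (fun _ : ι' => ν) (Equiv.ofInjective y hy).symm

instance : IsProbabilityMeasure (volume.restrict (Set.Icc (0 : ℝ) 1)) :=
  ⟨by simp⟩

lemma unitCube_eq_pi (m : ℕ) : unitCube m = Set.univ.pi fun _ => Set.Icc (0 : ℝ) 1 := by
  ext x
  exact Set.mem_univ_pi.symm

lemma measurableSet_unitCube (m : ℕ) : MeasurableSet (unitCube m) := by
  rw [unitCube_eq_pi]
  exact .univ_pi fun _ => measurableSet_Icc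

lemma volume_restrict_unitCube (m : ℕ) :
    volume.restrict (unitCube m) = Measure.pi fun _ => volume.restrict (Set.Icc (0 : ℝ) 1) := by
  rw [unitCube_eq_pi, volume_pi, Measure.restrict_pi_pi]

instance (m : ℕ) : IsProbabilityMeasure (volume.restrict (unitCube m)) := by
  rw [volume_restrict_unitCube]
  infer_instance

lemma volume_unitCube (m : ℕ) : volume (unitCube m) = 1 := by
  rw [← Measure.restrict_apply_univ, measure_univ]

lemma volume_restrict_unitCube_preimage_comp {n r : ℕ} {C : Set (Fin r → ℝ)}
    (hC : C ⊆ unitCube r) (mC : MeasurableSet C) {y : Fin r → Fin n} (hy : Function.Injective y) :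
    volume.restrict (unitCube n) ((fun t => t ∘ y) ⁻¹' C) = volume C := by
  rw [← Measure.map_apply (by fun_prop) mC, volume_restrict_unitCube,
    Measure.pi_map_comp_of_injective _ hy, ← volume_restrict_unitCube,
    Measure.restrict_apply mC, Set.inter_eq_self_of_subset_left hC]

lemma exists_card_eq_covNum {n k r : ℕ} (hrk : r ≤ k) :
    ∃ D : Finset (Fin r → Fin n), IsCoveringCode r k (D : Set (Fin r → Fin n)) ∧
      D.card = covNum n k r := by
  refine Nat.sInf_mem (s := {m | ∃ D : Finset (Fin r → Fin n),
    IsCoveringCode r k (D : Set (Fin r → Fin n)) ∧ D.card = m}) ⟨_, Finset.univ, fun a => ?_, rfl⟩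
  exact ⟨a ∘ Fin.castLE hrk, Finset.mem_coe.2 (Finset.mem_univ _), Fin.castLE hrk,
    Fin.strictMono_castLE hrk, fun _ => rfl⟩

lemma covNum_le_card {n k r : ℕ} {D : Finset (Fin r → Fin n)}
    (hD : IsCoveringCode r k (D : Set (Fin r → Fin n))) : covNum n k r ≤ D.card :=
  Nat.sInf_le ⟨D, hD, rfl⟩

lemma CoversCube.isCoveringCode_preimage {r k : ℕ} {C : Set (Fin r → ℝ)} (hC : CoversCube r k C)
    {Y : Type*} {t : Y → ℝ} (ht : ∀ j, t j ∈ Set.Icc (0 : ℝ) 1) :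
    IsCoveringCode r k {y : Fin r → Y | t ∘ y ∈ C} := by
  intro a
  obtain ⟨x, hxC, g, hg, hxg⟩ := hC (t ∘ a) fun i => ht (a i)
  refine ⟨a ∘ g, ?_, g, hg, fun _ => rfl⟩
  show t ∘ (a ∘ g) ∈ C
  rwa [show t ∘ (a ∘ g) = x from funext hxg]

lemma card_filter_injective (α β : Type*) [Fintype α] [Fintype β] [DecidableEq α]
    [DecidableEq β] :
    (Finset.univ.filter fun y : α → β => Function.Injective y).card =
      (Fintype.card β).descFactorial (Fintype.card α) := by
  rw [← Fintype.card_subtype, Fintype.card_congr (Equiv.subtypeInjectiveEquivEmbedding _ _),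
    Fintype.card_embedding_eq]

lemma card_filter_not_injective (α β : Type*) [Fintype α] [Fintype β] [DecidableEq α]
    [DecidableEq β] :
    (Finset.univ.filter fun y : α → β => ¬Function.Injective y).card =
      Fintype.card β ^ Fintype.card α - (Fintype.card β).descFactorial (Fintype.card α) := by
  rw [Finset.filter_not, Finset.card_sdiff_of_subset (Finset.filter_subset _ _),
    card_filter_injective, Finset.card_univ, Fintype.card_fun]

lemma sum_ite_injective_le (n r : ℕ) (a : ℝ≥0∞) :
    ∑ y : Fin r → Fin n, (if Function.Injective y then a else 1) ≤
      a * n ^ r + (n ^ r - n.descFactorial r : ℕ) := by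
  rw [Finset.sum_ite, Finset.sum_const, Finset.sum_const, card_filter_injective,
    card_filter_not_injective, Fintype.card_fin, Fintype.card_fin, nsmul_eq_mul, nsmul_one,
    mul_comm]
  gcongr
  exact_mod_cast n.descFactorial_le_pow r

lemma covNum_le_of_coversCube {r k : ℕ} {C : Set (Fin r → ℝ)} (hC : C ⊆ unitCube r)
    (mC : MeasurableSet C) (cov : CoversCube r k C) (n : ℕ) :
    (covNum n k r : ℝ≥0∞) ≤ volume C * n ^ r + (n ^ r - n.descFactorial r : ℕ) := by
  classical
  set μ := volume.restrict (unitCube n)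
  set A : (Fin r → Fin n) → Set (Fin n → ℝ) := fun y => (fun t => t ∘ y) ⁻¹' C
  have mA : ∀ y, MeasurableSet (A y) := fun y => mC.preimage (by fun_prop)
  have card_eq : ∀ t, ((Finset.univ.filter fun y => t ∘ y ∈ C).card : ℝ≥0∞) =
      ∑ y, (A y).indicator 1 t := by
    intro t
    simp only [Finset.natCast_card_filter, Set.indicator_apply, Pi.one_apply]
    rfl
  have expectation : ∫⁻ t, ∑ y, (A y).indicator 1 t ∂μ = ∑ y, μ (A y) := by
    rw [lintegral_finsetSum _ fun y _ => measurable_one.indicator (mA y)]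
    simp_rw [lintegral_indicator_one (mA _)]
  obtain ⟨t, ht, hle⟩ := exists_notMem_null_le_lintegral (μ := μ) (N := (unitCube n)ᶜ)
    (f := fun t => ∑ y, (A y).indicator 1 t) (by fun_prop (disch := exact mA _))
    (ae_iff.1 (ae_restrict_mem (measurableSet_unitCube n)))
  have hcode := cov.isCoveringCode_preimage (not_not.1 ht)
  calc (covNum n k r : ℝ≥0∞)
      ≤ (Finset.univ.filter fun y => t ∘ y ∈ C).card :=
        Nat.cast_le.2 (covNum_le_card (by simpa using hcode))
    _ ≤ ∑ y, μ (A y) := by rw [card_eq, ← expectation]; exact hle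
    _ ≤ ∑ y : Fin r → Fin n, if Function.Injective y then volume C else 1 := by
        refine Finset.sum_le_sum fun y _ => ?_
        split_ifs with hy
        · exact (volume_restrict_unitCube_preimage_comp hC mC hy).le
        · exact prob_le_one
    _ ≤ volume C * n ^ r + (n ^ r - n.descFactorial r : ℕ) := sum_ite_injective_le n r _

lemma tendsto_one_sub_descFactorial_div_pow (r : ℕ) :
    Tendsto (fun n : ℕ => 1 - (n.descFactorial r : ℝ) / n ^ r) atTop (𝓝 0) := by
  have hne : ∀ᶠ n : ℕ in atTop, (n : ℝ) ^ r ≠ 0 :=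
    (eventually_gt_atTop 0).mono fun n hn => by positivity
  have := ((Asymptotics.isEquivalent_iff_tendsto_one hne).1
    (isEquivalent_descFactorial r)).const_sub 1
  simpa using this

lemma le_toReal_volume_of_coversCube {r k : ℕ} {s : ℝ}
    (hs : Tendsto (fun n : ℕ => (covNum n k r : ℝ) / (n : ℝ) ^ r) atTop (𝓝 s))
    {C : Set (Fin r → ℝ)} (hC : C ⊆ unitCube r) (mC : MeasurableSet C) (cov : CoversCube r k C) :
    s ≤ (volume C).toReal := by
  have hfin : volume C ≠ ⊤ :=
    measure_ne_top_of_subset hC (by rw [volume_unitCube]; exact one_ne_top)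
  have hbound : ∀ n : ℕ, 0 < n → (covNum n k r : ℝ) / n ^ r ≤
      (volume C).toReal + (1 - (n.descFactorial r : ℝ) / n ^ r) := by
    intro n hn
    have hreal := toReal_mono (by finiteness) (covNum_le_of_coversCube hC mC cov n)
    rw [toReal_add (by finiteness) (by finiteness), toReal_mul, toReal_pow, toReal_natCast,
      toReal_natCast, toReal_natCast, Nat.cast_sub (n.descFactorial_le_pow r), Nat.cast_pow]
      at hreal
    rw [div_le_iff₀ (by positivity)]
    field_simp
    linarith
  refine le_of_tendsto_of_tendsto hs ?_ ((eventually_gt_atTop 0).mono hbound)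
  simpa using (tendsto_one_sub_descFactorial_div_pow r).const_add (volume C).toReal

lemma exists_mem_Icc_div_natCast {n : ℕ} (hn : 0 < n) {x : ℝ} (hx : x ∈ Set.Icc (0 : ℝ) 1) :
    ∃ j : Fin n, x ∈ Set.Icc ((j : ℝ) / n) ((j + 1 : ℝ) / n) := by
  have hn' : (0 : ℝ) < n := Nat.cast_pos.2 hn
  set j := min ⌊x * n⌋₊ (n - 1)
  have hj_succ : ((j + 1 : ℕ) : ℝ) = min ((⌊x * n⌋₊ + 1 : ℕ) : ℝ) n := by
    rw [← Nat.cast_min]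
    congr 1
    omega
  refine ⟨⟨j, by omega⟩, ?_⟩
  rw [Set.mem_Icc, div_le_iff₀ hn', le_div_iff₀ hn']
  constructor
  · exact (Nat.cast_le.2 (min_le_left _ _)).trans (Nat.floor_le (mul_nonneg hx.1 hn'.le))
  · push_cast at hj_succ ⊢
    rw [hj_succ]
    exact le_min (Nat.lt_floor_add_one _).le (by nlinarith [hx.2])

lemma exists_coversCube_toReal_volume_le {n k r : ℕ} (hn : 0 < n) {D : Finset (Fin r → Fin n)}
    (hD : IsCoveringCode r k (D : Set (Fin r → Fin n))) :
    ∃ C : Set (Fin r → ℝ), C ⊆ unitCube r ∧ MeasurableSet C ∧ CoversCube r k C ∧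
      (volume C).toReal ≤ D.card / (n : ℝ) ^ r := by
  have hn' : (0 : ℝ) < n := Nat.cast_pos.2 hn
  set cell : (Fin r → Fin n) → Set (Fin r → ℝ) := fun y =>
    Set.univ.pi fun i => Set.Icc ((y i : ℝ) / n) ((y i + 1 : ℝ) / n)
  have volume_cell : ∀ y, volume (cell y) = ENNReal.ofReal (1 / n) ^ r := by
    intro y
    simp_rw [cell, volume_pi_pi, Real.volume_Icc, ← sub_div, add_sub_cancel_left,
      Finset.prod_const, Finset.card_univ, Fintype.card_fin]
  refine ⟨⋃ y ∈ D, cell y, ?_, ?_, ?_, ?_⟩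
  · refine Set.iUnion₂_subset fun y _ x hx i => ?_
    obtain ⟨hlo, hhi⟩ := hx i (Set.mem_univ i)
    have hsucc : ((y i : ℕ) + 1 : ℝ) ≤ n := by exact_mod_cast (y i).isLt
    exact ⟨(by positivity : (0 : ℝ) ≤ (y i : ℝ) / n).trans hlo,
      hhi.trans ((div_le_one hn').2 hsucc)⟩
  · exact Finset.measurableSet_biUnion D fun y _ => .univ_pi fun _ => measurableSet_Icc
  · intro a ha
    choose b hb using fun m => exists_mem_Icc_div_natCast hn (ha m)
    obtain ⟨y, hyD, g, hg, hyg⟩ := hD b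
    refine ⟨a ∘ g, Set.mem_biUnion hyD fun i _ => ?_, g, hg, fun _ => rfl⟩
    simpa only [← hyg i, Function.comp_apply] using hb (g i)
  · calc (volume (⋃ y ∈ D, cell y)).toReal
        ≤ (∑ y ∈ D, volume (cell y)).toReal :=
          toReal_mono (ENNReal.sum_ne_top.2 fun y _ => by rw [volume_cell]; finiteness)
            (measure_biUnion_finset_le D cell)
      _ = D.card / (n : ℝ) ^ r := by
          simp [volume_cell, div_eq_mul_inv]

theorem covNum_density_eq_measurable_inf_general {r k : ℕ} (hrk : r < k) (s : ℝ)
    (hs : Tendsto (fun n : ℕ => (covNum n k r : ℝ) / (n : ℝ) ^ r) atTop (𝓝 s)) :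
    s = sInf {v : ℝ | ∃ C : Set (Fin r → ℝ), C ⊆ unitCube r ∧ MeasurableSet C ∧
      CoversCube r k C ∧ (volume C).toReal = v} := by
  set V := {v : ℝ | ∃ C : Set (Fin r → ℝ), C ⊆ unitCube r ∧ MeasurableSet C ∧
    CoversCube r k C ∧ (volume C).toReal = v}
  have hV : BddBelow V := ⟨0, by rintro _ ⟨C, -, -, -, rfl⟩; exact toReal_nonneg⟩
  have grid_code : ∀ n : ℕ, 0 < n → ∃ v ∈ V, v ≤ covNum n k r / (n : ℝ) ^ r := by
    intro n hn
    obtain ⟨D, hD, hcard⟩ := exists_card_eq_covNum (n := n) hrk.le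
    obtain ⟨C, hC, mC, cov, hvol⟩ := exists_coversCube_toReal_volume_le hn hD
    exact ⟨_, ⟨C, hC, mC, cov, rfl⟩, hcard ▸ hvol⟩
  refine le_antisymm (le_csInf ?_ ?_) (ge_of_tendsto hs ?_)
  · obtain ⟨v, hv, -⟩ := grid_code 1 one_pos
    exact ⟨v, hv⟩
  · rintro _ ⟨C, hC, mC, cov, rfl⟩
    exact le_toReal_volume_of_coversCube hs hC mC cov
  · filter_upwards [eventually_gt_atTop 0] with n hn
    obtain ⟨v, hv, hle⟩ := grid_code n hn
    exact csInf_le_of_le hV hv hle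

/-- For positive integers `r < k`, the limit `s(k,r)` of `S(n,k,r)/n^r` equals
the infimum of `λ(C)` over all Lebesgue measurable covering `(k-r)`-insertion codes
`C ⊆ [0,1]^r`. -/
theorem covNum_density_eq_measurable_inf {r k : ℕ} (hr : 0 < r) (hrk : r < k) (s : ℝ)
    (hs : Tendsto (fun n : ℕ => (covNum n k r : ℝ) / (n : ℝ) ^ r) atTop (𝓝 s)) :
    s = sInf {v : ℝ | ∃ C : Set (Fin r → ℝ), C ⊆ unitCube r ∧ MeasurableSet C ∧
      CoversCube r k C ∧ (volume C).toReal = v} :=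
  covNum_density_eq_measurable_inf_general hrk s hs
end

section
/- For all positive integers n and r with r ≥ 2, every covering single-insertion code C ⊆ [n]^r (i.e., C covers [n]^{r+1}) satisfies |C| ≥ n^r / r; equivalently, S(n,r+1,r) ≥ n^r / r. -/
open MeasureTheory Filter Topology ENNReal

/-!
Let `B` be the set of words of length `r` outside the code `C`. For a word `y` of length
`r - 1` let `d(y, j)` (`insertCount`) be the number of letters whose insertion into `y` at
position `j` gives a word of `B`, and `s(y) = ∑ⱼ d(y, j)` (`insertDegree`). Inserting a letter
into `b ∈ B` gives a word of length `r + 1` covered by a codeword; that codeword is not `b`, so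
it arises by deleting a letter of `b` and inserting the new letter at a shifted position.
Hence, for fixed `b`, position and letter, the `r` words obtained this way are not all in `B`.
Double counting then gives `∑ s(y)² + ∑ d(y, j)² ≤ (r + 1)(r - 1) n |B|`, while Cauchy–Schwarz
gives `s(y)² ≤ r ∑ⱼ d(y, j)²` and `(r |B|)² = (∑ s(y))² ≤ n^(r-1) ∑ s(y)²`. Together,
`r |B| ≤ (r - 1) nʳ`, i.e. `r |C| ≥ nʳ`.
-/

theorem StrictMono.exists_eq_succAbove {r : ℕ} {g : Fin r → Fin (r + 1)} (hg : StrictMono g) :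
    ∃ i : Fin (r + 1), g = i.succAbove := by
  obtain ⟨i, hi⟩ : ∃ i, i ∉ Set.range g := by
    by_contra! h
    simpa using Fintype.card_le_of_surjective g h
  refine ⟨i, ?_⟩
  rw [Finset.orderEmbOfFin_unique (s := {i}ᶜ) (by simp [Finset.card_compl])
    (fun x => by simpa using fun h => hi ⟨x, h⟩) hg,
    Finset.orderEmbOfFin_compl_singleton_eq_succAboveOrderEmb]
  rfl

theorem covers_iff_exists_removeNth {X : Type*} {r : ℕ} (x : Fin r → X)
    (a : Fin (r + 1) → X) :
    Covers x a ↔ ∃ i, Fin.removeNth i a = x := by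
  constructor
  · rintro ⟨g, hg, hga⟩
    obtain ⟨i, rfl⟩ := hg.exists_eq_succAbove
    exact ⟨i, funext hga⟩
  · rintro ⟨i, rfl⟩
    exact ⟨i.succAbove, Fin.strictMono_succAbove i, fun _ => rfl⟩

theorem isCoveringCode_univ {X : Type*} {r k : ℕ} (h : r ≤ k) :
    IsCoveringCode r k (Set.univ : Set (Fin r → X)) :=
  fun a => ⟨a ∘ Fin.castLE h, trivial, Fin.castLE h, Fin.strictMono_castLE h, fun _ => rfl⟩

theorem Fin.removeNth_succAbove_insertNth {X : Type*} {m : ℕ} (i : Fin (m + 1)) (j : Fin (m + 2))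
    (c : X) (b : Fin (m + 1) → X) :
    removeNth (j.succAbove i) (insertNth (α := fun _ => X) j c b) =
      insertNth (α := fun _ => X) (i.predAbove j) c (removeNth i b) := by
  refine (insertNth_eq_iff.2 ⟨?_, ?_⟩).symm
  · simp [removeNth_apply, succAbove_succAbove_predAbove]
  · rw [← removeNth_removeNth_eq_swap, removeNth_insertNth]

open Finset

section InsertionCounts

variable {X : Type*} [Fintype X] [DecidableEq X] {m : ℕ} (B : Finset (Fin (m + 1) → X))

def insertCount (y : Fin m → X) (j : Fin (m + 1)) : ℕ :=
  #{c | Fin.insertNth j c y ∈ B}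

def insertDegree (y : Fin m → X) : ℕ :=
  ∑ j, insertCount B y j

theorem card_filter_removeNth_eq_insertCount (i : Fin (m + 1)) (y : Fin m → X) :
    #{b ∈ B | Fin.removeNth i b = y} = insertCount B y i := by
  refine (card_nbij' (fun c => Fin.insertNth i c y) (fun b => b i) ?_ ?_ ?_ ?_).symm
  · intro c hc
    simpa using hc
  · rintro b hb
    obtain ⟨hbB, rfl⟩ := mem_filter.1 hb
    simpa using hbB
  · intro c _
    simp
  · rintro b hb
    obtain ⟨-, rfl⟩ := mem_filter.1 hb
    simp

theorem sum_comp_removeNth (i : Fin (m + 1)) (F : (Fin m → X) → ℕ) :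
    ∑ b ∈ B, F (Fin.removeNth i b) = ∑ y, insertCount B y i * F y := by
  rw [← Finset.sum_fiberwise B (Fin.removeNth i)]
  refine sum_congr rfl fun y _ => ?_
  rw [sum_congr rfl fun b hb => by rw [(mem_filter.1 hb).2], sum_const, smul_eq_mul,
    card_filter_removeNth_eq_insertCount]

theorem sum_insertDegree : ∑ y, insertDegree B y = (m + 1) * #B := by
  calc ∑ y, insertDegree B y = ∑ j, ∑ y, insertCount B y j * 1 := by
        simp only [insertDegree, mul_one]
        exact sum_comm
    _ = ∑ _j : Fin (m + 1), ∑ _b ∈ B, 1 :=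
        sum_congr rfl fun j _ => (sum_comp_removeNth B j fun _ => 1).symm
    _ = (m + 1) * #B := by simp

theorem sum_insertCount_predAbove (y : Fin m → X) (i : Fin (m + 1)) :
    ∑ j : Fin (m + 2), insertCount B y (i.predAbove j) =
      insertDegree B y + insertCount B y i := by
  rw [Fin.sum_univ_succAbove _ i.castSucc]
  simp only [Fin.predAbove_castSucc_self, Fin.predAbove_succAbove]
  rw [insertDegree, add_comm]

variable {B}

theorem exists_insertNth_removeNth_notMem 
    (hB : IsCoveringCode (m + 1) (m + 2) (↑Bᶜ : Set (Fin (m + 1) → X)))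
    {b : Fin (m + 1) → X} (hb : b ∈ B) (j : Fin (m + 2)) (c : X) :
    ∃ i : Fin (m + 1), Fin.insertNth (i.predAbove j) c (Fin.removeNth i b) ∉ B := by
  obtain ⟨x, hxB, hcov⟩ := hB (Fin.insertNth j c b)
  obtain ⟨k, rfl⟩ := (covers_iff_exists_removeNth _ _).1 hcov
  rcases eq_or_ne k j with rfl | hkj
  · simp_all
  · obtain ⟨i, rfl⟩ := Fin.exists_succAbove_eq hkj
    refine ⟨i, ?_⟩
    simpa [Fin.removeNth_succAbove_insertNth] using hxB

theorem sum_insertCount_removeNth_le 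
    (hB : IsCoveringCode (m + 1) (m + 2) (↑Bᶜ : Set (Fin (m + 1) → X)))
    {b : Fin (m + 1) → X} (hb : b ∈ B) (j : Fin (m + 2)) :
    ∑ i, insertCount B (Fin.removeNth i b) (i.predAbove j) ≤ m * Fintype.card X := by
  simp only [insertCount, card_filter]
  rw [sum_comm]
  refine (sum_le_sum (g := fun _ => m) fun c _ => ?_).trans (by simp [mul_comm])
  obtain ⟨i, hi⟩ := exists_insertNth_removeNth_notMem hB hb j c
  rw [← card_filter]
  simpa using card_lt_univ_of_notMem (x := i) (by simpa using hi)

theorem sum_sq_insertDegree_add_sum_sq_insertCount_le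
    (hB : IsCoveringCode (m + 1) (m + 2) (↑Bᶜ : Set (Fin (m + 1) → X))) :
    ∑ y, insertDegree B y ^ 2 + ∑ y, ∑ i, insertCount B y i ^ 2 ≤
      #B * ((m + 2) * (m * Fintype.card X)) := by
  calc ∑ y, insertDegree B y ^ 2 + ∑ y, ∑ i, insertCount B y i ^ 2
      = ∑ y, ∑ i, insertCount B y i * (insertDegree B y + insertCount B y i) := by
        simp only [mul_add, sum_add_distrib, ← sum_mul, sq, insertDegree]
    _ = ∑ i, ∑ b ∈ B,
          (insertDegree B (Fin.removeNth i b) + insertCount B (Fin.removeNth i b) i) := by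
        rw [sum_comm]
        exact sum_congr rfl fun i _ => (sum_comp_removeNth B i _).symm
    _ = ∑ b ∈ B, ∑ j, ∑ i, insertCount B (Fin.removeNth i b) (i.predAbove j) := by
        rw [sum_comm]
        refine sum_congr rfl fun b _ => ?_
        rw [sum_comm]
        simp only [sum_insertCount_predAbove]
    _ ≤ ∑ _b ∈ B, ∑ _j : Fin (m + 2), m * Fintype.card X :=
        sum_le_sum fun b hb => sum_le_sum fun j _ => sum_insertCount_removeNth_le hB hb j
    _ = #B * ((m + 2) * (m * Fintype.card X)) := by simp

theorem succ_mul_card_le_of_isCoveringCode_compl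
    (hB : IsCoveringCode (m + 1) (m + 2) (↑Bᶜ : Set (Fin (m + 1) → X))) :
    (m + 1) * #B ≤ m * Fintype.card X ^ (m + 1) := by
  have hkey := sum_sq_insertDegree_add_sum_sq_insertCount_le hB
  set P := ∑ y, insertDegree B y ^ 2
  set Q := ∑ y, ∑ i, insertCount B y i ^ 2
  have hS : ((m + 1) * #B) ^ 2 ≤ Fintype.card X ^ m * P := by
    simpa [← sum_insertDegree] using sq_sum_le_card_mul_sum_sq (s := univ) (f := insertDegree B)
  have hPQ : P ≤ (m + 1) * Q := by
    rw [mul_sum]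
    exact sum_le_sum fun y _ => by
      simpa [insertDegree] using sq_sum_le_card_mul_sum_sq (s := univ) (f := insertCount B y)
  have hP : P ≤ (m + 1) * (m * Fintype.card X * #B) := by
    refine Nat.le_of_mul_le_mul_left ?_ (show 0 < m + 2 by omega)
    nlinarith [Nat.mul_le_mul_left (m + 1) hkey]
  rcases Nat.eq_zero_or_pos #B with hB₀ | hB₀
  · simp [hB₀]
  refine Nat.le_of_mul_le_mul_left ?_ (show 0 < (m + 1) * #B by positivity)
  calc (m + 1) * #B * ((m + 1) * #B) = ((m + 1) * #B) ^ 2 := (sq _).symm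
    _ ≤ Fintype.card X ^ m * P := hS
    _ ≤ Fintype.card X ^ m * ((m + 1) * (m * Fintype.card X * #B)) := Nat.mul_le_mul_left _ hP
    _ = (m + 1) * #B * (m * Fintype.card X ^ (m + 1)) := by ring

end InsertionCounts

theorem pow_card_le_mul_card_of_isCoveringCode {X : Type*} [Fintype X] [DecidableEq X] {m : ℕ}
    {C : Finset (Fin (m + 1) → X)}
    (hC : IsCoveringCode (m + 1) (m + 2) (C : Set (Fin (m + 1) → X))) :
    Fintype.card X ^ (m + 1) ≤ (m + 1) * #C := by
  have hB := succ_mul_card_le_of_isCoveringCode_compl (B := Cᶜ) (by simpa using hC)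
  have hcard : #C + #Cᶜ = Fintype.card X ^ (m + 1) := by
    simp [card_add_card_compl]
  nlinarith

theorem exists_isCoveringCode_card_eq_covNum (n : ℕ) {r k : ℕ} (h : r ≤ k) :
    ∃ C : Finset (Fin r → Fin n), IsCoveringCode r k (↑C : Set (Fin r → Fin n)) ∧
      #C = covNum n k r :=
  Nat.sInf_mem (s := {m | ∃ C : Finset (Fin r → Fin n),
    IsCoveringCode r k (↑C : Set (Fin r → Fin n)) ∧ #C = m})
    ⟨_, univ, by simpa using isCoveringCode_univ h, rfl⟩

theorem card_coveringCode_ge_general {n r : ℕ} :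
    (∀ C : Finset (Fin r → Fin n), IsCoveringCode r (r + 1) (↑C : Set (Fin r → Fin n)) →
      (n : ℝ) ^ r / r ≤ (C.card : ℝ)) ∧
    (n : ℝ) ^ r / r ≤ (covNum n (r + 1) r : ℝ) := by
  have hcode : ∀ C : Finset (Fin r → Fin n),
      IsCoveringCode r (r + 1) (↑C : Set (Fin r → Fin n)) → (n : ℝ) ^ r / r ≤ (C.card : ℝ) := by
    intro C hC
    cases r with
    | zero => simp -- `x / 0 = 0` in `ℝ`
    | succ m =>
      have h := pow_card_le_mul_card_of_isCoveringCode hC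
      rw [Fintype.card_fin] at h
      rw [div_le_iff₀ (by positivity), mul_comm]
      exact_mod_cast h
  obtain ⟨C, hC, hcard⟩ := exists_isCoveringCode_card_eq_covNum n r.le_succ
  exact ⟨hcode, hcard ▸ hcode C hC⟩

/-- For positive `n` and `r ≥ 2`, every covering single-insertion code
`C ⊆ [n]^r` satisfies `|C| ≥ n^r / r`; equivalently, `S(n,r+1,r) ≥ n^r / r`. -/
theorem card_coveringCode_ge {n r : ℕ} (hn : 0 < n) (hr : 2 ≤ r) :
    (∀ C : Finset (Fin r → Fin n), IsCoveringCode r (r + 1) (↑C : Set (Fin r → Fin n)) →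
      (n : ℝ) ^ r / r ≤ (C.card : ℝ)) ∧
    (n : ℝ) ^ r / r ≤ (covNum n (r + 1) r : ℝ) :=
  card_coveringCode_ge_general
end
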